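/- Let A, B, C, D ∈ ℝ² with no three collinear. Then there exists a nonzero polynomial g(x, y) of degree at most 2 such that: (i) g(O) = 0 for every point O ∈ ℝ² that is a center of some conic through A, B, C, D; (ii) g vanishes at the six midpoints (A+B)/2, (A+C)/2, (A+D)/2, (B+C)/2, (B+D)/2, (C+D)/2; and (iii) g(E) = 0 for every point E lying on two opposite sides of the quadrangle, that is, every E lying both on the line through A, B and on the line through C, D, or both on the line through A, C and on the line through B, D, or both on the line through A, D and on the line through B, C. -/

import Mathlib

/-- A conic (possibly degenerate) in the affine plane `ℝ × ℝ`, given by the six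
coefficients of a polynomial `a·x² + b·x·y + c·y² + d·x + e·y + g`. -/
structure Conic where
  a : ℝ
  b : ℝ
  c : ℝ
  d : ℝ
  e : ℝ
  g : ℝ

/-- Evaluation of the defining polynomial of a conic at a point of `ℝ × ℝ`. -/
def Conic.eval (f : Conic) (p : ℝ × ℝ) : ℝ :=
  f.a * p.1 ^ 2 + f.b * p.1 * p.2 + f.c * p.2 ^ 2 + f.d * p.1 + f.e * p.2 + f.g

/-- The defining polynomial is nonzero. -/
def Conic.Nonzero (f : Conic) : Prop :=
  ¬ (f.a = 0 ∧ f.b = 0 ∧ f.c = 0 ∧ f.d = 0 ∧ f.e = 0 ∧ f.g = 0)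

/-- The conic passes through the four points `A`, `B`, `C`, `D`. -/
def Conic.Through (f : Conic) (A B C D : ℝ × ℝ) : Prop :=
  f.eval A = 0 ∧ f.eval B = 0 ∧ f.eval C = 0 ∧ f.eval D = 0

/-- No three of the four points `A`, `B`, `C`, `D` are collinear. -/
def NoThreeCollinear (A B C D : ℝ × ℝ) : Prop :=
  ¬ Collinear ℝ ({A, B, C} : Set (ℝ × ℝ)) ∧ ¬ Collinear ℝ ({A, B, D} : Set (ℝ × ℝ)) ∧
  ¬ Collinear ℝ ({A, C, D} : Set (ℝ × ℝ)) ∧ ¬ Collinear ℝ ({B, C, D} : Set (ℝ × ℝ))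

/-- The line through `M` with direction `u`. -/
def parmLine (M u : ℝ × ℝ) : Set (ℝ × ℝ) :=
  {p | ∃ t : ℝ, p = M + t • u}

/-- `O` is a center of the conic `f`. -/
def Conic.IsCenter (f : Conic) (O : ℝ × ℝ) : Prop :=
  ∀ w : ℝ × ℝ, f.eval (O + w) = f.eval (O - w)

/-!
The conics through `A, B, C, D` form a pencil: evaluation at the four points is onto `ℝ⁴`, so
its kernel is two-dimensional and is spanned by the line pairs `p = AB · CD` and `q = AC · BD`.
A center `O` of `s • p + t • q` is a critical point, so `(s, t) ≠ 0` lies in the kernel of the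
matrix with columns `∇p(O)`, `∇q(O)`; hence `O` lies on the Jacobian conic `det (∇p, ∇q)`.
The diagonal points are the double points, hence centers, of the three line pairs of the pencil.
That the midpoints lie on the Jacobian conic, and that it is nonzero, are direct computations.
-/

/-- Twice the signed area of the triangle `P Q X`; for `P ≠ Q`, `cross P Q` is an affine equation
of the line `PQ`. -/
def cross (P Q X : ℝ × ℝ) : ℝ :=
  (Q.1 - P.1) * (X.2 - P.2) - (Q.2 - P.2) * (X.1 - P.1)

@[simp] theorem cross_self_left (P Q : ℝ × ℝ) : cross P Q P = 0 := by
  unfold cross; ring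

@[simp] theorem cross_self_right (P Q : ℝ × ℝ) : cross P Q Q = 0 := by
  unfold cross; ring

theorem cross_rotate (P Q R : ℝ × ℝ) : cross Q R P = cross P Q R := by
  unfold cross; ring

theorem cross_swap (P Q R : ℝ × ℝ) : cross P R Q = -cross P Q R := by
  unfold cross; ring

theorem midpoint_eq_prod (P Q : ℝ × ℝ) :
    midpoint ℝ P Q = ((P.1 + Q.1) / 2, (P.2 + Q.2) / 2) := by
  rw [midpoint_eq_smul_add]
  ext <;> simp only [invOf_eq_inv, smul_add, Prod.fst_add, Prod.snd_add, Prod.smul_fst,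
    Prod.smul_snd, smul_eq_mul] <;> ring

theorem collinear_of_cross_eq_zero {P Q R : ℝ × ℝ} (h : cross P Q R = 0) :
    Collinear ℝ ({P, Q, R} : Set (ℝ × ℝ)) := by
  by_cases hPQ : P = Q
  · simpa [hPQ] using collinear_pair ℝ Q R
  rw [Set.pair_comm, Set.insert_comm]
  apply collinear_insert_of_mem_affineSpan_pair
  rw [← vsub_vadd R P, vadd_left_mem_affineSpan_pair]
  have hPQ' : Q.1 - P.1 ≠ 0 ∨ Q.2 - P.2 ≠ 0 := by
    by_contra! h'
    exact hPQ (Prod.ext (by linarith) (by linarith))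
  unfold cross at h
  rcases hPQ' with h₁ | h₂
  · refine ⟨(R.1 - P.1) / (Q.1 - P.1), Prod.ext ?_ ?_⟩ <;>
      simp only [vsub_eq_sub, Prod.smul_fst, Prod.smul_snd, Prod.fst_sub, Prod.snd_sub,
        smul_eq_mul] <;> field_simp
    linear_combination -h
  · refine ⟨(R.2 - P.2) / (Q.2 - P.2), Prod.ext ?_ ?_⟩ <;>
      simp only [vsub_eq_sub, Prod.smul_fst, Prod.smul_snd, Prod.fst_sub, Prod.snd_sub,
        smul_eq_mul] <;> field_simp
    linear_combination h

theorem cross_eq_zero_of_mem_affineSpan {P Q X : ℝ × ℝ} (h : X ∈ line[ℝ, P, Q]) :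
    cross P Q X = 0 := by
  rw [← vsub_vadd X P, vadd_left_mem_affineSpan_pair] at h
  obtain ⟨r, hr⟩ := h
  have h1 := congrArg Prod.fst hr
  have h2 := congrArg Prod.snd hr
  simp only [Prod.smul_fst, Prod.smul_snd, vsub_eq_sub, Prod.fst_sub, Prod.snd_sub,
    smul_eq_mul] at h1 h2
  unfold cross
  linear_combination (Q.2 - P.2) * h1 - (Q.1 - P.1) * h2

theorem NoThreeCollinear.cross_ne_zero {A B C D : ℝ × ℝ} (h : NoThreeCollinear A B C D) :
    cross A B C ≠ 0 ∧ cross A B D ≠ 0 ∧ cross A C D ≠ 0 :=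
  ⟨mt collinear_of_cross_eq_zero h.1, mt collinear_of_cross_eq_zero h.2.1,
    mt collinear_of_cross_eq_zero h.2.2.1⟩

namespace Conic

def equivFun : Conic ≃ (Fin 6 → ℝ) where
  toFun f := ![f.a, f.b, f.c, f.d, f.e, f.g]
  invFun v := ⟨v 0, v 1, v 2, v 3, v 4, v 5⟩
  left_inv _ := rfl
  right_inv v := by ext i; fin_cases i <;> rfl

instance : AddCommGroup Conic := equivFun.addCommGroup

instance : Module ℝ Conic := equivFun.module ℝ

theorem add_def (f g : Conic) :
    f + g = ⟨f.a + g.a, f.b + g.b, f.c + g.c, f.d + g.d, f.e + g.e, f.g + g.g⟩ := rfl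

theorem smul_def (s : ℝ) (f : Conic) :
    s • f = ⟨s * f.a, s * f.b, s * f.c, s * f.d, s * f.e, s * f.g⟩ := rfl

theorem finrank_eq_six : Module.finrank ℝ Conic = 6 := by
  rw [(equivFun.linearEquiv ℝ).finrank_eq, Module.finrank_fin_fun]

instance : FiniteDimensional ℝ Conic := .of_finrank_eq_succ finrank_eq_six

theorem Nonzero.ne_zero {f : Conic} (hf : f.Nonzero) : f ≠ 0 := by
  rintro rfl
  exact hf ⟨rfl, rfl, rfl, rfl, rfl, rfl⟩

theorem nonzero_of_eval_ne_zero {f : Conic} {X : ℝ × ℝ} (h : f.eval X ≠ 0) : f.Nonzero := by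
  rintro ⟨ha, hb, hc, hd, he, hg⟩
  simp [eval, ha, hb, hc, hd, he, hg] at h

def evalₗ (X : ℝ × ℝ) : Conic →ₗ[ℝ] ℝ where
  toFun f := f.eval X
  map_add' f g := by simp only [add_def, eval]; ring
  map_smul' s f := by simp only [smul_def, eval, RingHom.id_apply, smul_eq_mul]; ring

@[simp] theorem evalₗ_apply (X : ℝ × ℝ) (f : Conic) : evalₗ X f = f.eval X := rfl

@[simp] theorem eval_zero (X : ℝ × ℝ) : (0 : Conic).eval X = 0 :=
  (evalₗ X).map_zero

@[simp] theorem eval_add (f g : Conic) (X : ℝ × ℝ) : (f + g).eval X = f.eval X + g.eval X :=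
  (evalₗ X).map_add f g

@[simp] theorem eval_smul (s : ℝ) (f : Conic) (X : ℝ × ℝ) :
    (s • f).eval X = s * f.eval X :=
  (evalₗ X).map_smul s f

def gradX (f : Conic) (O : ℝ × ℝ) : ℝ := 2 * f.a * O.1 + f.b * O.2 + f.d

def gradY (f : Conic) (O : ℝ × ℝ) : ℝ := f.b * O.1 + 2 * f.c * O.2 + f.e

theorem gradX_add_smul (s t : ℝ) (p q : Conic) (O : ℝ × ℝ) :
    (s • p + t • q).gradX O = s * p.gradX O + t * q.gradX O := by
  simp only [add_def, smul_def, gradX]; ring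

theorem gradY_add_smul (s t : ℝ) (p q : Conic) (O : ℝ × ℝ) :
    (s • p + t • q).gradY O = s * p.gradY O + t * q.gradY O := by
  simp only [add_def, smul_def, gradY]; ring

theorem IsCenter.gradX_eq_zero {f : Conic} {O : ℝ × ℝ} (h : f.IsCenter O) :
    f.gradX O = 0 := by
  have h := h (1, 0)
  simp only [eval, gradX, Prod.fst_add, Prod.snd_add, Prod.fst_sub, Prod.snd_sub] at h ⊢
  linear_combination h / 2

theorem IsCenter.gradY_eq_zero {f : Conic} {O : ℝ × ℝ} (h : f.IsCenter O) :
    f.gradY O = 0 := by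
  have h := h (0, 1)
  simp only [eval, gradY, Prod.fst_add, Prod.snd_add, Prod.fst_sub, Prod.snd_sub] at h ⊢
  linear_combination h / 2

def jacobian (p q : Conic) : Conic :=
  ⟨2 * (p.a * q.b - q.a * p.b), 4 * (p.a * q.c - q.a * p.c), 2 * (p.b * q.c - q.b * p.c),
   2 * p.a * q.e + p.d * q.b - 2 * q.a * p.e - q.d * p.b,
   p.b * q.e + 2 * p.d * q.c - q.b * p.e - 2 * q.d * p.c,
   p.d * q.e - q.d * p.e⟩

theorem eval_jacobian (p q : Conic) (O : ℝ × ℝ) :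
    (jacobian p q).eval O = p.gradX O * q.gradY O - p.gradY O * q.gradX O := by
  simp only [jacobian, eval, gradX, gradY]; ring

theorem eval_jacobian_eq_zero_of_isCenter {p q : Conic} {s t : ℝ} {O : ℝ × ℝ}
    (hf : (s • p + t • q).Nonzero) (hO : (s • p + t • q).IsCenter O) :
    (jacobian p q).eval O = 0 := by
  have hx := hO.gradX_eq_zero
  have hy := hO.gradY_eq_zero
  rw [gradX_add_smul] at hx
  rw [gradY_add_smul] at hy
  rw [eval_jacobian]
  by_contra h
  have hs : s = 0 := (mul_eq_zero.1 (by linear_combination q.gradY O * hx - q.gradX O * hy :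
    s * (p.gradX O * q.gradY O - p.gradY O * q.gradX O) = 0)).resolve_right h
  have ht : t = 0 := (mul_eq_zero.1 (by linear_combination p.gradX O * hy - p.gradY O * hx :
    t * (p.gradX O * q.gradY O - p.gradY O * q.gradX O) = 0)).resolve_right h
  exact hf.ne_zero (by simp [hs, ht])

end Conic

def linePair (P Q R S : ℝ × ℝ) : Conic :=
  let l : ℝ × ℝ × ℝ := (P.2 - Q.2, Q.1 - P.1, P.1 * Q.2 - Q.1 * P.2)
  let m : ℝ × ℝ × ℝ := (R.2 - S.2, S.1 - R.1, R.1 * S.2 - S.1 * R.2)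
  ⟨l.1 * m.1, l.1 * m.2.1 + l.2.1 * m.1, l.2.1 * m.2.1, l.1 * m.2.2 + l.2.2 * m.1,
   l.2.1 * m.2.2 + l.2.2 * m.2.1, l.2.2 * m.2.2⟩

@[simp] theorem eval_linePair (P Q R S X : ℝ × ℝ) :
    (linePair P Q R S).eval X = cross P Q X * cross R S X := by
  simp only [linePair, Conic.eval, cross]; ring

theorem eval_linePair_midpoint_self (P Q R S : ℝ × ℝ) :
    (linePair P Q R S).eval (midpoint ℝ P Q) = 0 := by
  simp only [eval_linePair, midpoint_eq_prod, cross]; ring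

theorem eval_linePair_midpoint (P Q R S : ℝ × ℝ) :
    (linePair P Q R S).eval (midpoint ℝ P R) = cross P Q R * cross P R S / 4 := by
  simp only [eval_linePair, midpoint_eq_prod, cross]; ring

theorem linePair_nonzero {P Q R S : ℝ × ℝ} (hQ : cross P Q R ≠ 0) (hS : cross P R S ≠ 0) :
    (linePair P Q R S).Nonzero :=
  Conic.nonzero_of_eval_ne_zero (X := midpoint ℝ P R) <| by
    rw [eval_linePair_midpoint]; exact div_ne_zero (mul_ne_zero hQ hS) four_ne_zero

theorem isCenter_linePair {P Q R S E : ℝ × ℝ} (hPQ : E ∈ line[ℝ, P, Q])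
    (hRS : E ∈ line[ℝ, R, S]) :
    (linePair P Q R S).IsCenter E := by
  intro w
  have h₁ := cross_eq_zero_of_mem_affineSpan hPQ
  have h₂ := cross_eq_zero_of_mem_affineSpan hRS
  simp only [eval_linePair]
  unfold cross at *
  simp only [Prod.fst_add, Prod.snd_add, Prod.fst_sub, Prod.snd_sub]
  linear_combination 2 * ((S.1 - R.1) * w.2 - (S.2 - R.2) * w.1) * h₁ +
    2 * ((Q.1 - P.1) * w.2 - (Q.2 - P.2) * w.1) * h₂

theorem exists_eval_eq_one_of_cross_ne_zero {P Q R X : ℝ × ℝ} (hQ : cross P Q X ≠ 0)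
    (hR : cross P R X ≠ 0) :
    ∃ f : Conic, f.eval X = 1 ∧ f.eval P = 0 ∧ f.eval Q = 0 ∧ f.eval R = 0 := by
  refine ⟨(cross P Q X * cross P R X)⁻¹ • linePair P Q P R, ?_, ?_, ?_, ?_⟩ <;>
    simp only [Conic.eval_smul, eval_linePair, cross_self_left, cross_self_right, mul_zero,
      zero_mul]
  exact inv_mul_cancel₀ (mul_ne_zero hQ hR)

def throughMap (A B C D : ℝ × ℝ) : Conic →ₗ[ℝ] Fin 4 → ℝ :=
  LinearMap.pi ![Conic.evalₗ A, Conic.evalₗ B, Conic.evalₗ C, Conic.evalₗ D]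

theorem mem_ker_throughMap {A B C D : ℝ × ℝ} {f : Conic} :
    f ∈ LinearMap.ker (throughMap A B C D) ↔ f.Through A B C D := by
  simp [throughMap, funext_iff, Fin.forall_fin_succ, Conic.Through]

theorem throughMap_surjective {A B C D : ℝ × ℝ} (h : NoThreeCollinear A B C D) :
    Function.Surjective (throughMap A B C D) := by
  obtain ⟨hABC, hABD, hACD⟩ := h.cross_ne_zero
  have hsingle : ∀ i, ∃ f, throughMap A B C D f = Pi.single i 1 := by
    intro i
    fin_cases i
    · obtain ⟨f, hf⟩ := exists_eval_eq_one_of_cross_ne_zero (P := B) (Q := C) (R := D) (X := A)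
        (by rwa [cross_rotate]) (by rwa [cross_rotate])
      exact ⟨f, by ext j; fin_cases j <;> simp [throughMap, hf]⟩
    · obtain ⟨f, hf⟩ := exists_eval_eq_one_of_cross_ne_zero (P := A) (Q := C) (R := D) (X := B)
        (by rwa [cross_swap, neg_ne_zero]) (by rwa [cross_swap, neg_ne_zero])
      exact ⟨f, by ext j; fin_cases j <;> simp [throughMap, hf]⟩
    · obtain ⟨f, hf⟩ := exists_eval_eq_one_of_cross_ne_zero (P := A) (Q := B) (R := D) (X := C)
        hABC (by rwa [cross_swap, neg_ne_zero])
      exact ⟨f, by ext j; fin_cases j <;> simp [throughMap, hf]⟩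
    · obtain ⟨f, hf⟩ := exists_eval_eq_one_of_cross_ne_zero (P := A) (Q := B) (R := C) (X := D)
        hABD hACD
      exact ⟨f, by ext j; fin_cases j <;> simp [throughMap, hf]⟩
  choose w hw using hsingle
  intro y
  refine ⟨∑ i, y i • w i, ?_⟩
  simp_rw [map_sum, map_smul, hw, ← Pi.single_smul', smul_eq_mul, mul_one]
  exact Finset.univ_sum_single y

theorem finrank_ker_throughMap {A B C D : ℝ × ℝ} (h : NoThreeCollinear A B C D) :
    Module.finrank ℝ (LinearMap.ker (throughMap A B C D)) = 2 := by
  have := LinearMap.finrank_range_add_finrank_ker (throughMap A B C D)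
  rw [LinearMap.range_eq_top.2 (throughMap_surjective h), finrank_top, Module.finrank_fin_fun,
    Conic.finrank_eq_six] at this
  omega

theorem linearIndependent_linePair {A B C D : ℝ × ℝ} (h : NoThreeCollinear A B C D) :
    LinearIndependent ℝ ![linePair A B C D, linePair A C B D] := by
  obtain ⟨hABC, hABD, hACD⟩ := h.cross_ne_zero
  refine LinearIndependent.pair_iff.2 fun s t hst => ?_
  have hAB := congrArg (Conic.eval · (midpoint ℝ A B)) hst
  have hAC := congrArg (Conic.eval · (midpoint ℝ A C)) hst
  simp only [Conic.eval_add, Conic.eval_smul, Conic.eval_zero, eval_linePair_midpoint_self,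
    eval_linePair_midpoint, cross_swap A B C, mul_zero, add_zero, zero_add, neg_mul,
    mul_eq_zero, div_eq_zero_iff, neg_eq_zero, hABC, hABD, hACD, four_ne_zero, or_self,
    or_false] at hAB hAC
  exact ⟨hAC, hAB⟩

theorem span_linePair_eq_ker_throughMap {A B C D : ℝ × ℝ} (h : NoThreeCollinear A B C D) :
    Submodule.span ℝ (Set.range ![linePair A B C D, linePair A C B D]) =
      LinearMap.ker (throughMap A B C D) := by
  apply Submodule.eq_of_le_of_finrank_eq
  · rw [Submodule.span_le, Set.range_subset_iff]
    intro i
    fin_cases i <;> exact mem_ker_throughMap.2 (by simp [Conic.Through])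
  · rw [finrank_span_eq_card (linearIndependent_linePair h), finrank_ker_throughMap h,
      Fintype.card_fin]

theorem exists_eq_linePair_combination {A B C D : ℝ × ℝ} (h : NoThreeCollinear A B C D)
    {f : Conic} (hf : f.Through A B C D) :
    ∃ s t : ℝ, f = s • linePair A B C D + t • linePair A C B D := by
  rw [← mem_ker_throughMap, ← span_linePair_eq_ker_throughMap h,
    Submodule.mem_span_range_iff_exists_fun] at hf
  obtain ⟨c, rfl⟩ := hf
  exact ⟨c 0, c 1, by simp [Fin.sum_univ_two]⟩

def elevenPointConic (A B C D : ℝ × ℝ) : Conic :=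
  Conic.jacobian (linePair A B C D) (linePair A C B D)

theorem eval_elevenPointConic_self (A B C D : ℝ × ℝ) :
    (elevenPointConic A B C D).eval A = cross A B C * cross A B D * cross A C D := by
  simp only [elevenPointConic, Conic.eval_jacobian, Conic.gradX, Conic.gradY, linePair, cross]
  ring

theorem elevenPointConic_nonzero {A B C D : ℝ × ℝ} (h : NoThreeCollinear A B C D) :
    (elevenPointConic A B C D).Nonzero := by
  obtain ⟨hABC, hABD, hACD⟩ := h.cross_ne_zero
  exact Conic.nonzero_of_eval_ne_zero (X := A) <| by
    rw [eval_elevenPointConic_self]; exact mul_ne_zero (mul_ne_zero hABC hABD) hACD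

theorem eval_elevenPointConic_midpoints (A B C D : ℝ × ℝ) :
    let g := elevenPointConic A B C D
    g.eval (midpoint ℝ A B) = 0 ∧ g.eval (midpoint ℝ A C) = 0 ∧
      g.eval (midpoint ℝ A D) = 0 ∧ g.eval (midpoint ℝ B C) = 0 ∧
      g.eval (midpoint ℝ B D) = 0 ∧ g.eval (midpoint ℝ C D) = 0 := by
  refine ⟨?_, ?_, ?_, ?_, ?_, ?_⟩ <;>
    simp only [elevenPointConic, Conic.eval_jacobian, Conic.gradX, Conic.gradY, linePair,
      midpoint_eq_prod] <;>
    ring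

theorem eval_elevenPointConic_eq_zero_of_isCenter {A B C D O : ℝ × ℝ}
    (h : NoThreeCollinear A B C D) {f : Conic} (hf : f.Nonzero) (hABCD : f.Through A B C D)
    (hO : f.IsCenter O) : (elevenPointConic A B C D).eval O = 0 := by
  obtain ⟨s, t, rfl⟩ := exists_eq_linePair_combination h hABCD
  exact Conic.eval_jacobian_eq_zero_of_isCenter hf hO

/-- **The eleven-point conic.** For four base points with no three collinear there
is a (possibly degenerate) conic `g` passing through every center of a conic of
the family through the four base points, through the six midpoints of the sides
of the quadrangle, and through the three diagonal points of the quadrangle. -/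
theorem eleven_point_conic
    (A B C D : ℝ × ℝ) (hgen : NoThreeCollinear A B C D) :
    ∃ g : Conic, g.Nonzero ∧
      (∀ O : ℝ × ℝ,
        (∃ f : Conic, f.Nonzero ∧ f.Through A B C D ∧ f.IsCenter O) → g.eval O = 0) ∧
      (g.eval (midpoint ℝ A B) = 0 ∧ g.eval (midpoint ℝ A C) = 0 ∧
       g.eval (midpoint ℝ A D) = 0 ∧ g.eval (midpoint ℝ B C) = 0 ∧
       g.eval (midpoint ℝ B D) = 0 ∧ g.eval (midpoint ℝ C D) = 0) ∧
      (∀ E : ℝ × ℝ,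
        ((E ∈ affineSpan ℝ ({A, B} : Set (ℝ × ℝ)) ∧
          E ∈ affineSpan ℝ ({C, D} : Set (ℝ × ℝ))) ∨
         (E ∈ affineSpan ℝ ({A, C} : Set (ℝ × ℝ)) ∧
          E ∈ affineSpan ℝ ({B, D} : Set (ℝ × ℝ))) ∨
         (E ∈ affineSpan ℝ ({A, D} : Set (ℝ × ℝ)) ∧
          E ∈ affineSpan ℝ ({B, C} : Set (ℝ × ℝ)))) → g.eval E = 0) := by
  obtain ⟨hABC, hABD, hACD⟩ := hgen.cross_ne_zero
  have hcenter : ∀ {f : Conic} {O : ℝ × ℝ}, f.Nonzero → f.Through A B C D →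
      f.IsCenter O → (elevenPointConic A B C D).eval O = 0 :=
    eval_elevenPointConic_eq_zero_of_isCenter hgen
  refine ⟨elevenPointConic A B C D, elevenPointConic_nonzero hgen,
    fun O ⟨f, hf, hABCD, hO⟩ => hcenter hf hABCD hO,
    eval_elevenPointConic_midpoints A B C D, ?_⟩
  rintro E (⟨h₁, h₂⟩ | ⟨h₁, h₂⟩ | ⟨h₁, h₂⟩)
  · exact hcenter (linePair_nonzero hABC hACD)
      (by simp [Conic.Through]) (isCenter_linePair h₁ h₂)
  · exact hcenter (linePair_nonzero (by rwa [cross_swap, neg_ne_zero]) hABD)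
      (by simp [Conic.Through]) (isCenter_linePair h₁ h₂)
  · exact hcenter (linePair_nonzero (by rwa [cross_swap, neg_ne_zero]) hABC)
      (by simp [Conic.Through]) (isCenter_linePair h₁ h₂)
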